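/- Let G be a non-compact locally compact Hausdorff group with a left Haar measure μ and modular function Δ. Then for every compact symmetric neighborhood V of the identity element e of G, there exists a sequence (k_n)_{n∈ℕ} in G such that Δ(k_n) ≤ 1 for every n and, for all ℓ ≠ n, the sets V·k_ℓ⁻¹ and V·k_n⁻¹ are disjoint and the sets k_ℓ·V·V and k_n·V·V are disjoint. -/

import Mathlib

/-!
Put `W := (V * V) * (V * V)⁻¹`, a compact symmetric set. If `k_ℓ⁻¹ * k_n ∉ W` then both pairs of
translates are disjoint, so it suffices to pick the `k_n` one at a time, each outside the compact
set `F * W ∪ (F * W)⁻¹`, where `F` is the finite set of earlier points; this is possible since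
`G` is not compact. Replacing a point `g` by `g⁻¹` keeps it outside that set, and one of the two
has `Δ ≤ 1` because `Δ g⁻¹ * Δ g = 1`.
-/

open MeasureTheory ENNReal Set Topology Pointwise

section Modular

variable {G : Type*} [Group G] [MeasurableSpace G] [MeasurableMul G]

theorem le_one_or_inv_le_one_of_measure_mul_singleton {μ : Measure G} {Δ : G → ℝ}
    (hΔ : ∀ (a : G) (E : Set G), MeasurableSet E →
      μ (E * ({a} : Set G)) = ENNReal.ofReal (Δ a) * μ E)
    {E : Set G} (hE : MeasurableSet E) (hE₀ : μ E ≠ 0) (hE_top : μ E ≠ ∞) (g : G) :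
    Δ g ≤ 1 ∨ Δ g⁻¹ ≤ 1 := by
  have hEg : MeasurableSet (E * {g}) := by
    rw [Set.mul_singleton]
    exact (MeasurableEquiv.mulRight g).measurableSet_image.mpr hE
  have hcancel : E * {g} * {g⁻¹} = E := by
    rw [mul_assoc, singleton_mul_singleton, mul_inv_cancel, singleton_one, mul_one]
  have hprod : ENNReal.ofReal (Δ g⁻¹) * ENNReal.ofReal (Δ g) = 1 := by
    refine (ENNReal.mul_eq_right hE₀ hE_top).mp ?_
    rw [mul_assoc, ← hΔ g E hE, ← hΔ g⁻¹ _ hEg, hcancel]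
  by_contra! h
  have h₁ := ENNReal.one_lt_ofReal.mpr h.1
  have h₂ := ENNReal.one_lt_ofReal.mpr h.2
  exact (Right.one_lt_mul' h₂ h₁).ne' hprod

end Modular

section Separated

variable {G : Type*} [Group G]

theorem disjoint_singleton_mul_of_inv_mul_notMem {a b : G} {S : Set G}
    (h : a⁻¹ * b ∉ S * S⁻¹) : Disjoint ({a} * S) ({b} * S) := by
  rw [Set.disjoint_left]
  rintro _ ⟨a', ha', x, hx, rfl⟩ ⟨b', hb', y, hy, hxy⟩
  rw [mem_singleton_iff] at ha' hb'
  subst ha' hb'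
  refine h ⟨x, hx, y⁻¹, Set.inv_mem_inv.mpr hy, ?_⟩
  dsimp only at hxy ⊢
  rw [eq_inv_mul_iff_mul_eq, ← mul_assoc, ← hxy, mul_inv_cancel_right]

theorem disjoint_mul_singleton_of_mul_inv_notMem {a b : G} {S : Set G}
    (h : a * b⁻¹ ∉ S⁻¹ * S) : Disjoint (S * {a}) (S * {b}) := by
  rw [Set.disjoint_left]
  rintro _ ⟨x, hx, a', ha', rfl⟩ ⟨y, hy, b', hb', hxy⟩
  rw [mem_singleton_iff] at ha' hb'
  subst ha' hb'
  refine h ⟨x⁻¹, Set.inv_mem_inv.mpr hx, y, hy, ?_⟩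
  dsimp only at hxy ⊢
  rw [inv_mul_eq_iff_eq_mul, ← mul_assoc, ← hxy, mul_inv_cancel_right]

variable [TopologicalSpace G] [IsTopologicalGroup G] [NoncompactSpace G]

theorem exists_seq_pairwise_inv_mul_notMem {K : Set G} (hK : IsCompact K) (hKsymm : K⁻¹ = K)
    (P : G → Prop) (hP : ∀ g, P g ∨ P g⁻¹) :
    ∃ f : ℕ → G, (∀ n, P (f n)) ∧ Pairwise fun m n => (f m)⁻¹ * f n ∉ K := by
  obtain ⟨f, hfP, hf⟩ := exists_seq_of_forall_finset_exists P (fun x y => x⁻¹ * y ∉ K) <| by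
    intro s _
    have hsK : IsCompact ((s : Set G) * K) := s.finite_toSet.isCompact.mul hK
    obtain ⟨g, hg⟩ := (ne_univ_iff_exists_notMem _).mp (hsK.union hsK.inv).ne_univ
    have hg_notMem : ∀ h ∈ ({g, g⁻¹} : Set G), ∀ x ∈ s, x⁻¹ * h ∉ K := by
      rintro h hh x hx hxh
      rcases hh with rfl | rfl
      · exact hg (Or.inl ⟨x, hx, _, hxh, mul_inv_cancel_left x h⟩)
      · exact hg (Or.inr ⟨x, hx, _, hxh, by group⟩)
    rcases hP g with hPg | hPg
    · exact ⟨g, hPg, hg_notMem g (by simp)⟩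
    · exact ⟨g⁻¹, hPg, hg_notMem g⁻¹ (by simp)⟩
  refine ⟨f, hfP, fun m n hmn => ?_⟩
  rcases hmn.lt_or_gt with h | h
  · exact hf m n h
  · rw [← hKsymm, ← Set.inv_mem_inv, mul_inv_rev, inv_inv, inv_inv]
    exact hf n m h

end Separated

theorem exists_seq_disjoint_translates_general
    {G : Type*} [Group G] [TopologicalSpace G] [IsTopologicalGroup G]
    [T2Space G] [MeasurableSpace G] [BorelSpace G]
    (μ : Measure G) [μ.IsHaarMeasure]
    (hnoncompact : ¬ CompactSpace G)
    -- `Δ` is the modular function of `G`: `μ(E·a) = Δ(a)·μ(E)` for measurable `E` and `a ∈ G`.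
    (Δ : G → ℝ)
    (hΔ : ∀ (a : G) (E : Set G), MeasurableSet E →
      μ (E * ({a} : Set G)) = ENNReal.ofReal (Δ a) * μ E)
    -- `V` is a compact symmetric neighborhood of the identity element.
    (V : Set G) (hV : IsCompact V) (hVsymm : V⁻¹ = V) (hVnhds : V ∈ 𝓝 (1 : G)) :
    ∃ k : ℕ → G, (∀ n : ℕ, Δ (k n) ≤ 1) ∧
      ∀ ℓ n : ℕ, ℓ ≠ n →
        Disjoint (V * ({(k ℓ)⁻¹} : Set G)) (V * ({(k n)⁻¹} : Set G)) ∧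
        Disjoint (({k ℓ} : Set G) * V * V) (({k n} : Set G) * V * V) := by
  have : NoncompactSpace G := not_compactSpace_iff.mp hnoncompact
  have hVV : IsCompact (V * V) := hV.mul hV
  have hW_symm : (V * V * (V * V)⁻¹)⁻¹ = V * V * (V * V)⁻¹ := by rw [mul_inv_rev, inv_inv]
  have hΔ_or := le_one_or_inv_le_one_of_measure_mul_singleton hΔ hV.measurableSet
    (μ.measure_pos_of_mem_nhds hVnhds).ne' hV.measure_lt_top.ne
  obtain ⟨k, hkΔ, hk⟩ :=
    exists_seq_pairwise_inv_mul_notMem (hVV.mul hVV.inv) hW_symm (fun g => Δ g ≤ 1) hΔ_or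
  have hV_sub : V⁻¹ * V ⊆ V * V * (V * V)⁻¹ := by
    have h1V : (1 : G) ∈ V := mem_of_mem_nhds hVnhds
    rw [hVsymm]
    nth_rewrite 2 [← hVsymm]
    exact mul_subset_mul (subset_mul_left V h1V) (inv_subset_inv.mpr (subset_mul_left V h1V))
  refine ⟨k, hkΔ, fun ℓ n hℓn => ⟨?_, ?_⟩⟩
  · refine disjoint_mul_singleton_of_mul_inv_notMem fun h => hk hℓn (hV_sub ?_)
    rwa [inv_inv] at h
  · rw [mul_assoc, mul_assoc]
    exact disjoint_singleton_mul_of_inv_mul_notMem (hk hℓn)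

theorem exists_seq_disjoint_translates
    {G : Type*} [Group G] [TopologicalSpace G] [IsTopologicalGroup G]
    [T2Space G] [LocallyCompactSpace G] [MeasurableSpace G] [BorelSpace G]
    (μ : Measure G) [μ.IsHaarMeasure]
    (hnoncompact : ¬ CompactSpace G)
    -- `Δ` is the modular function of `G`: `μ(E·a) = Δ(a)·μ(E)` for measurable `E` and `a ∈ G`.
    (Δ : G → ℝ) (hΔpos : ∀ a : G, 0 < Δ a)
    (hΔ : ∀ (a : G) (E : Set G), MeasurableSet E →
      μ (E * ({a} : Set G)) = ENNReal.ofReal (Δ a) * μ E)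
    -- `V` is a compact symmetric neighborhood of the identity element.
    (V : Set G) (hV : IsCompact V) (hVsymm : V⁻¹ = V) (hVnhds : V ∈ 𝓝 (1 : G)) :
    ∃ k : ℕ → G, (∀ n : ℕ, Δ (k n) ≤ 1) ∧
      ∀ ℓ n : ℕ, ℓ ≠ n →
        Disjoint (V * ({(k ℓ)⁻¹} : Set G)) (V * ({(k n)⁻¹} : Set G)) ∧
        Disjoint (({k ℓ} : Set G) * V * V) (({k n} : Set G) * V * V) :=
  exists_seq_disjoint_translates_general μ hnoncompact Δ hΔ V hV hVsymm hVnhds
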